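/- Let A = A_0^-(11n_57) be the chain complex of F2[U]-modules freely generated over F2[U] by U^4 a, U^3 b, U^3 c, U^3 d, U^2 e, U^2 f, Ug, h, i, j, k, l, m, n, o, p, q, with differential ∂(U^4 a) = U^4 b, ∂(U^3 d) = U^4 a + U·(U^2 f), ∂(U^2 f) = U^3 b, ∂(U^2 e) = U^3 c + U^2 h, ∂(Ug) = Ui, ∂j = Ug + k, ∂k = Ui, ∂l = n, ∂m = U^2 h + o, ∂p = Ul + q, ∂q = Un, and zero on the remaining generators, with the homological gradings inherited from CFK^∞(11n_57). Then H(A) ≅ F2[U]·[h] ⊕ F2·[i], where [h] generates a free F2[U]-summand in homological grading -2 and [i] is a U-torsion class in grading -2 with U[i] = 0. Consequently V_0 := -(1/2)·max{ r : there exists z in H_r(A) with U^n z ≠ 0 for all n ≥ 0 } equals 1; that is, V_0(11n_57) = 1. -/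

import Mathlib

/- STATEMENT 10: the complex A = A_0^-(11n_57), free over F2[U] on
U⁴a, U³b, U³c, U³d, U²e, U²f, Ug, h, i, j, k, l, m, n, o, p, q with the
differential inherited from CFK^∞(11n_57), has homology
F2[U]·[h] ⊕ F2·[i] with [h] free of grading -2 and [i] U-torsion of
grading -2; consequently V_0(11n_57) = 1. -/

open Polynomial

noncomputable section

/-- F2[U] -/
abbrev R2 : Type := Polynomial (ZMod 2)

/-- the variable U -/
def UU : R2 := Polynomial.X

/-- the i-th free generator -/
def gen {n : ℕ} (i : Fin n) : Fin n → R2 := Pi.single i 1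

/-- the F2[U]-linear map sending the i-th generator to `v i` -/
def mkD {n : ℕ} (v : Fin n → (Fin n → R2)) : (Fin n → R2) →ₗ[R2] (Fin n → R2) :=
  (Pi.basisFun R2 (Fin n)).constr ℕ v

/-- `x` is homogeneous of degree `r` -/
def Homog {n : ℕ} (M : Fin n → ℤ) (r : ℤ) (x : Fin n → R2) : Prop :=
  ∀ i : Fin n, ∀ k : ℕ, (x i).coeff k ≠ 0 → M i - 2 * (k : ℤ) = r

/- generators of A_0^-(11n_57):
   U⁴a = 0, U³b = 1, U³c = 2, U³d = 3, U²e = 4, U²f = 5, Ug = 6,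
   h = 7, i = 8, j = 9, k = 10, l = 11, m = 12, n = 13, o = 14,
   p = 15, q = 16 -/

/-- the differential of A_0^-(11n_57) -/
def d : (Fin 17 → R2) →ₗ[R2] (Fin 17 → R2) :=
  mkD ![UU • gen 1,                 -- ∂(U⁴a) = U⁴b = U·(U³b)
        0, 0,                       -- ∂(U³b) = ∂(U³c) = 0
        gen 0 + UU • gen 5,         -- ∂(U³d) = U⁴a + U·(U²f)
        gen 2 + UU ^ 2 • gen 7,     -- ∂(U²e) = U³c + U²h
        gen 1,                      -- ∂(U²f) = U³b
        UU • gen 8,                 -- ∂(Ug) = Ui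
        0, 0,                       -- ∂h = ∂i = 0
        gen 6 + gen 10,             -- ∂j = Ug + k
        UU • gen 8,                 -- ∂k = Ui
        gen 13,                     -- ∂l = n
        UU ^ 2 • gen 7 + gen 14,    -- ∂m = U²h + o
        0, 0,                       -- ∂n = ∂o = 0
        UU • gen 11 + gen 16,       -- ∂p = Ul + q
        UU • gen 13]                -- ∂q = Un

/-- homological gradings inherited from CFK^∞(11n_57) -/
def M : Fin 17 → ℤ :=
  ![-7, -6, -6, -6, -5, -5, -3, -2, -2, -2, -3, -5, -5, -6, -6, -6, -7]

-- auxiliary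
lemma htwo : (2 : R2) = 0 := by
  rw [← map_ofNat (Polynomial.C : ZMod 2 →+* R2) 2, show (2 : ZMod 2) = 0 from rfl, map_zero]
lemma htwoz : (2 : ZMod 2) = 0 := rfl
lemma addself (a : R2) : a + a = 0 := by linear_combination a * htwo
lemma UUpow_ne (n : ℕ) : UU ^ n ≠ 0 := pow_ne_zero n Polynomial.X_ne_zero

lemma mkD_apply {n : ℕ} (v : Fin n → (Fin n → R2)) (z : Fin n → R2) :
    mkD v z = ∑ i, z i • v i := by
  rw [mkD, Module.Basis.constr_apply_fintype]
  simp [Pi.basisFun_equivFun]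

lemma sum17 {A : Type*} [AddCommMonoid A] (f : Fin 17 → A) :
    ∑ i, f i = f 0 + f 1 + f 2 + f 3 + f 4 + f 5 + f 6 + f 7 + f 8 + f 9 +
      f 10 + f 11 + f 12 + f 13 + f 14 + f 15 + f 16 := by
  simp [Fin.sum_univ_succ, ← add_assoc]

lemma d_apply (z : Fin 17 → R2) : d z =
    z 0 • (UU • gen 1) + z 1 • 0 + z 2 • 0 + z 3 • (gen 0 + UU • gen 5) +
    z 4 • (gen 2 + UU ^ 2 • gen 7) + z 5 • gen 1 + z 6 • (UU • gen 8) +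
    z 7 • 0 + z 8 • 0 + z 9 • (gen 6 + gen 10) + z 10 • (UU • gen 8) +
    z 11 • gen 13 + z 12 • (UU ^ 2 • gen 7 + gen 14) + z 13 • 0 + z 14 • 0 +
    z 15 • (UU • gen 11 + gen 16) + z 16 • (UU • gen 13) := by
  rw [d, mkD_apply, sum17]; rfl

lemma dc0 (z : Fin 17 → R2) : d z 0 = z 3 := by
  rw [d_apply]; simp (config := { decide := true }) [gen, Pi.single_apply]
lemma dc1 (z : Fin 17 → R2) : d z 1 = UU * z 0 + z 5 := by
  rw [d_apply]; simp (config := { decide := true }) [gen, Pi.single_apply]; try ring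
lemma dc2 (z : Fin 17 → R2) : d z 2 = z 4 := by
  rw [d_apply]; simp (config := { decide := true }) [gen, Pi.single_apply]
lemma dc3 (z : Fin 17 → R2) : d z 3 = 0 := by
  rw [d_apply]; simp (config := { decide := true }) [gen, Pi.single_apply]
lemma dc4 (z : Fin 17 → R2) : d z 4 = 0 := by
  rw [d_apply]; simp (config := { decide := true }) [gen, Pi.single_apply]
lemma dc5 (z : Fin 17 → R2) : d z 5 = UU * z 3 := by
  rw [d_apply]; simp (config := { decide := true }) [gen, Pi.single_apply]; try ring
lemma dc6 (z : Fin 17 → R2) : d z 6 = z 9 := by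
  rw [d_apply]; simp (config := { decide := true }) [gen, Pi.single_apply]
lemma dc7 (z : Fin 17 → R2) : d z 7 = UU ^ 2 * z 4 + UU ^ 2 * z 12 := by
  rw [d_apply]; simp (config := { decide := true }) [gen, Pi.single_apply]; try ring
lemma dc8 (z : Fin 17 → R2) : d z 8 = UU * z 6 + UU * z 10 := by
  rw [d_apply]; simp (config := { decide := true }) [gen, Pi.single_apply]; try ring
lemma dc9 (z : Fin 17 → R2) : d z 9 = 0 := by
  rw [d_apply]; simp (config := { decide := true }) [gen, Pi.single_apply]
lemma dc10 (z : Fin 17 → R2) : d z 10 = z 9 := by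
  rw [d_apply]; simp (config := { decide := true }) [gen, Pi.single_apply]
lemma dc11 (z : Fin 17 → R2) : d z 11 = UU * z 15 := by
  rw [d_apply]; simp (config := { decide := true }) [gen, Pi.single_apply]; try ring
lemma dc12 (z : Fin 17 → R2) : d z 12 = 0 := by
  rw [d_apply]; simp (config := { decide := true }) [gen, Pi.single_apply]
lemma dc13 (z : Fin 17 → R2) : d z 13 = z 11 + UU * z 16 := by
  rw [d_apply]; simp (config := { decide := true }) [gen, Pi.single_apply]; try ring
lemma dc14 (z : Fin 17 → R2) : d z 14 = z 12 := by
  rw [d_apply]; simp (config := { decide := true }) [gen, Pi.single_apply]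
lemma dc15 (z : Fin 17 → R2) : d z 15 = 0 := by
  rw [d_apply]; simp (config := { decide := true }) [gen, Pi.single_apply]
lemma dc16 (z : Fin 17 → R2) : d z 16 = z 15 := by
  rw [d_apply]; simp (config := { decide := true }) [gen, Pi.single_apply]

lemma ddz (z : Fin 17 → R2) : d (d z) = 0 := by
  funext j
  fin_cases j <;>
    simp [dc0, dc1, dc2, dc3, dc4, dc5, dc6, dc7, dc8, dc9, dc10, dc11, dc12,
      dc13, dc14, dc15, dc16, addself]

lemma dgen7 : d (gen 7) = 0 := by
  funext j
  fin_cases j <;>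
    simp (config := { decide := true }) [dc0, dc1, dc2, dc3, dc4, dc5, dc6, dc7, dc8, dc9,
      dc10, dc11, dc12, dc13, dc14, dc15, dc16, gen, Pi.single_apply]

lemma dgen8 : d (gen 8) = 0 := by
  funext j
  fin_cases j <;>
    simp (config := { decide := true }) [dc0, dc1, dc2, dc3, dc4, dc5, dc6, dc7, dc8, dc9,
      dc10, dc11, dc12, dc13, dc14, dc15, dc16, gen, Pi.single_apply]

lemma dgen10 : d (gen 10) = UU • gen 8 := by
  funext j
  fin_cases j <;>
    simp (config := { decide := true }) [dc0, dc1, dc2, dc3, dc4, dc5, dc6, dc7, dc8, dc9,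
      dc10, dc11, dc12, dc13, dc14, dc15, dc16, gen, Pi.single_apply]

lemma homog7 : Homog M (-2) (gen 7) := by
  intro i k hk
  rcases eq_or_ne i 7 with rfl | hi
  · have h1 : gen (7 : Fin 17) 7 = 1 := rfl
    rw [h1, Polynomial.coeff_one] at hk
    have hk0 : k = 0 := by by_contra hne; simp [hne] at hk
    subst hk0
    norm_num [show M 7 = -2 from rfl]
  · exfalso; apply hk
    have : gen (7 : Fin 17) i = 0 := by simp [gen, Pi.single_apply, hi]
    simp [this]

lemma homog8 : Homog M (-2) (gen 8) := by
  intro i k hk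
  rcases eq_or_ne i 8 with rfl | hi
  · have h1 : gen (8 : Fin 17) 8 = 1 := rfl
    rw [h1, Polynomial.coeff_one] at hk
    have hk0 : k = 0 := by by_contra hne; simp [hne] at hk
    subst hk0
    norm_num [show M 8 = -2 from rfl]
  · exfalso; apply hk
    have : gen (8 : Fin 17) i = 0 := by simp [gen, Pi.single_apply, hi]
    simp [this]

section
variable (z : Fin 17 → R2)

lemma exist_part (hz : d z = 0) :
    z + (z 7 + UU ^ 2 * (z 2 + z 14)) • gen 7 +
      (Polynomial.C ((z 8).coeff 0)) • gen 8 ∈ LinearMap.range d := by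
  have h0 : z 3 = 0 := by have h := congrFun hz 0; rw [dc0] at h; exact h
  have h1 : UU * z 0 + z 5 = 0 := by have h := congrFun hz 1; rw [dc1] at h; exact h
  have hc2 : z 4 = 0 := by have h := congrFun hz 2; rw [dc2] at h; exact h
  have h6 : z 9 = 0 := by have h := congrFun hz 6; rw [dc6] at h; exact h
  have h8c : UU * z 6 + UU * z 10 = 0 := by have h := congrFun hz 8; rw [dc8] at h; exact h
  have h13c : z 11 + UU * z 16 = 0 := by have h := congrFun hz 13; rw [dc13] at h; exact h
  have h14 : z 12 = 0 := by have h := congrFun hz 14; rw [dc14] at h; exact h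
  have h16 : z 15 = 0 := by have h := congrFun hz 16; rw [dc16] at h; exact h
  have h10 : z 10 = z 6 := by
    have hm : UU * (z 6 + z 10) = 0 := by linear_combination h8c
    have := mul_eq_zero.mp hm
    rcases this with h | h
    · exact absurd h Polynomial.X_ne_zero
    · linear_combination h - z 6 * htwo
  have h11 : z 11 = UU * z 16 := by linear_combination h13c - UU * z 16 * htwo
  have h5 : z 5 = UU * z 0 := by linear_combination h1 - UU * z 0 * htwo
  have hdivX : UU * (z 8).divX + Polynomial.C ((z 8).coeff 0) = z 8 :=
    Polynomial.X_mul_divX_add (z 8)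
  refine ⟨z 0 • gen 3 + z 1 • gen 5 + z 2 • gen 4 + z 6 • gen 9 +
    (z 8).divX • gen 10 + z 13 • gen 11 + z 14 • gen 12 + z 16 • gen 15, ?_⟩
  funext j
  fin_cases j <;>
    simp (config := { decide := true }) [dc0, dc1, dc2, dc3, dc4, dc5, dc6, dc7, dc8, dc9,
      dc10, dc11, dc12, dc13, dc14, dc15, dc16, gen, Pi.single_apply, h0, hc2, h6, h14, h16,
      h10, h11, h5]
  · linear_combination - z 7 * htwo
  · linear_combination hdivX - Polynomial.C ((z 8).coeff 0) * htwo
end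

lemma uniq_part (z : Fin 17 → R2) (p' : R2) (e' : ZMod 2)
    (hmem : z + p' • gen 7 + (Polynomial.C e') • gen 8 ∈ LinearMap.range d) :
    p' = z 7 + UU ^ 2 * (z 2 + z 14) ∧ e' = (z 8).coeff 0 := by
  obtain ⟨y, hy⟩ := hmem
  have hB : y 4 = z 2 := by
    have h := congrFun hy 2; rw [dc2] at h
    simpa (config := { decide := true }) [gen, Pi.single_apply] using h
  have hC : y 12 = z 14 := by
    have h := congrFun hy 14; rw [dc14] at h
    simpa (config := { decide := true }) [gen, Pi.single_apply] using h
  have hA : UU ^ 2 * y 4 + UU ^ 2 * y 12 = z 7 + p' := by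
    have h := congrFun hy 7; rw [dc7] at h
    simpa (config := { decide := true }) [gen, Pi.single_apply] using h
  have hD : UU * y 6 + UU * y 10 = z 8 + Polynomial.C e' := by
    have h := congrFun hy 8; rw [dc8] at h
    simpa (config := { decide := true }) [gen, Pi.single_apply] using h
  constructor
  · linear_combination hA - UU ^ 2 * hB - UU ^ 2 * hC - z 7 * htwo + (p' + z 7 - UU ^ 2 * (z 2 + z 14)) * htwo
  · have h0 := congrArg (fun q => Polynomial.coeff q 0) hD
    simp only [Polynomial.coeff_add, Polynomial.mul_coeff_zero,
      Polynomial.coeff_C_zero, UU, Polynomial.coeff_X_zero, zero_mul] at h0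
    -- h0 : 0 + 0 = (z 8).coeff 0 + e'
    linear_combination - h0 - (z 8).coeff 0 * htwoz

lemma gen7_not_bdry (n : ℕ) : UU ^ n • gen 7 ∉ LinearMap.range d := by
  rintro ⟨y, hy⟩
  have hB : y 4 = 0 := by
    have h := congrFun hy 2; rw [dc2] at h
    simpa (config := { decide := true }) [gen, Pi.single_apply] using h
  have hC : y 12 = 0 := by
    have h := congrFun hy 14; rw [dc14] at h
    simpa (config := { decide := true }) [gen, Pi.single_apply] using h
  have hA : UU ^ 2 * y 4 + UU ^ 2 * y 12 = UU ^ n := by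
    have h := congrFun hy 7; rw [dc7] at h
    simpa (config := { decide := true }) [gen, Pi.single_apply, hB, hC] using h
  rw [hB, hC] at hA
  exact UUpow_ne n (by linear_combination -hA)

lemma M_le (i : Fin 17) : M i ≤ -2 := by fin_cases i <;> decide

lemma ub_part (r : ℤ) (z : Fin 17 → R2) (hz : d z = 0) (hom : Homog M r z)
    (hnb : ∀ n : ℕ, UU ^ n • z ∉ LinearMap.range d) : r ≤ -2 := by
  have hz0 : z ≠ 0 := by
    rintro rfl
    exact hnb 0 (by rw [smul_zero]; exact ⟨0, map_zero d⟩)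
  obtain ⟨i, hi⟩ : ∃ i, z i ≠ 0 := by
    by_contra h; push_neg at h; exact hz0 (funext h)
  obtain ⟨k, hk⟩ : ∃ k, (z i).coeff k ≠ 0 := by
    by_contra h; push_neg at h
    exact hi (Polynomial.ext fun n => by simp [h n])
  have h1 := hom i k hk
  have h2 := M_le i
  have h3 : (0 : ℤ) ≤ (k : ℤ) := Int.natCast_nonneg k
  linarith


theorem stmt_10 :
    -- A is a chain complex
    d ∘ₗ d = 0 ∧
    -- h is a cycle, homogeneous of grading -2
    d (gen 7) = 0 ∧ Homog M (-2) (gen 7) ∧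
    -- i is a cycle, homogeneous of grading -2
    d (gen 8) = 0 ∧ Homog M (-2) (gen 8) ∧
    -- [i] is U-torsion: U·[i] = 0
    UU • gen 8 ∈ LinearMap.range d ∧
    -- H(A) ≅ F2[U]·[h] ⊕ F2·[i]
    (∀ z : Fin 17 → R2, d z = 0 →
      ∃! pe : R2 × ZMod 2,
        z + pe.1 • gen 7 + (Polynomial.C pe.2) • gen 8 ∈ LinearMap.range d) ∧
    -- max { r : ∃ z ∈ H_r(A) with U^n z ≠ 0 for all n ≥ 0 } = -2
    IsGreatest {r : ℤ | ∃ z : Fin 17 → R2, d z = 0 ∧ Homog M r z ∧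
      ∀ n : ℕ, UU ^ n • z ∉ LinearMap.range d} (-2) ∧
    -- hence V_0(11n_57) = -(1/2)·(-2) = 1
    (-(1 : ℚ) / 2) * (-2) = 1 := by
  refine ⟨LinearMap.ext ddz, dgen7, homog7, dgen8, homog8, ⟨gen 10, dgen10⟩, ?_,
    ⟨⟨gen 7, dgen7, homog7, gen7_not_bdry⟩, ?_⟩, by norm_num⟩
  · intro z hz
    refine ⟨(z 7 + UU ^ 2 * (z 2 + z 14), (z 8).coeff 0), exist_part z hz, ?_⟩
    rintro ⟨p', e'⟩ hp
    obtain ⟨h1, h2⟩ := uniq_part z p' e' hp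
    simp [Prod.ext_iff, h1, h2]
  · rintro r ⟨z, hz, hom, hnb⟩
    exact ub_part r z hz hom hnb
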